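/- Under the Case-C2 setup, assume additionally that it is not the case that both of the following hold: (the removal of v_1 disconnects d_1 from both sources) and (the removal of v_2 disconnects s_2 from both destinations). Then either there exists a path from s_1 to d_1 that does not contain v_1 and is disjoint from P_22, or there exists a path from s_2 to d_2 that does not contain v_2 and is disjoint from P_11. -/

import Mathlib

open List

/-- `IsPath E p u w` : the nonempty list `p` of vertices is a directed path
from `u` to `w` with respect to the edge relation `E`. -/
def IsPath {V : Type*} (E : V → V → Prop) (p : List V) (u w : V) : Prop :=
  p ≠ [] ∧ p.head? = some u ∧ p.getLast? = some w ∧ p.Chain' E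

/-- `Reaches E u w` (written `u ~> w`) : there is a directed path from `u` to `w`. -/
def Reaches {V : Type*} (E : V → V → Prop) (u w : V) : Prop :=
  ∃ p, IsPath E p u w

/-- A two-unicast layered network: a finite directed graph, with two sources
`s1, s2` and two destinations `d1, d2` (all four distinct), vertices partitioned
into layers `1, ..., r` such that every edge goes from a layer to the next one,
the first layer is `{s1, s2}`, the last layer is `{d1, d2}`, and each source
reaches its corresponding destination. -/
structure TwoUnicastNetwork (V : Type*) [Fintype V] where
  E : V → V → Prop
  s1 : V
  s2 : V
  d1 : V
  d2 : V
  r : ℕ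
  layer : V → ℕ
  layer_pos : ∀ v, 1 ≤ layer v
  layer_le : ∀ v, layer v ≤ r
  edge_layer : ∀ u w, E u w → layer w = layer u + 1
  s_ne : s1 ≠ s2
  d_ne : d1 ≠ d2
  sd_ne : ∀ s d, (s = s1 ∨ s = s2) → (d = d1 ∨ d = d2) → s ≠ d
  first_layer : ∀ v, layer v = 1 ↔ v = s1 ∨ v = s2
  last_layer : ∀ v, layer v = r ↔ v = d1 ∨ v = d2
  conn1 : Reaches E s1 d1
  conn2 : Reaches E s2 d2

/-- `InterferesOn N S Ri srcOther v` : within the induced subgraph `G[S]`, the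
node `v` causes interference on the path `Ri` : `v ∈ S`, `v ∉ Ri`, there is an
edge (inside `G[S]`) from `v` into a node of `Ri`, and there is a path from the
other source `srcOther` to `v` lying inside `G[S]` and disjoint from `Ri`. -/
def InterferesOn {V : Type*} [Fintype V] (N : TwoUnicastNetwork V) (S : Set V)
    (Ri : List V) (srcOther : V) (v : V) : Prop :=
  v ∈ S ∧ v ∉ Ri ∧ (∃ w ∈ Ri, w ∈ S ∧ N.E v w) ∧
    ∃ q, IsPath N.E q srcOther v ∧ (∀ x ∈ q, x ∈ S) ∧ ∀ x ∈ q, x ∉ Ri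

/-- `n_i(G[S])` : the number of nodes causing interference on `Ri` within the
induced subgraph `G[S]`, the interfering path coming from `srcOther`. -/
noncomputable def nInterf {V : Type*} [Fintype V] (N : TwoUnicastNetwork V)
    (S : Set V) (Ri : List V) (srcOther : V) : ℕ :=
  {v | InterferesOn N S Ri srcOther v}.ncard

/-- `n_i^D` : the number of nodes of the other path `Rother` causing (direct)
interference on `Ri` in `G`. -/
noncomputable def nDirect {V : Type*} [Fintype V] (N : TwoUnicastNetwork V)
    (Ri Rother : List V) (srcOther : V) : ℕ :=
  {v | InterferesOn N Set.univ Ri srcOther v ∧ v ∈ Rother}.ncard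

/-- The pair `(R1, R2)` (paths `s1 → d1` and `s2 → d2`) has manageable
interference: there is `S ⊇ R1 ∪ R2` with `n_1(G[S]) ≠ 1` and `n_2(G[S]) ≠ 1`. -/
def Manageable {V : Type*} [Fintype V] (N : TwoUnicastNetwork V)
    (R1 R2 : List V) : Prop :=
  ∃ S : Set V, (∀ x ∈ R1, x ∈ S) ∧ (∀ x ∈ R2, x ∈ S) ∧
    nInterf N S R1 N.s2 ≠ 1 ∧ nInterf N S R2 N.s1 ≠ 1

/-- The pair `(R1, R2)` has `(s1,d1)`-manageable interference. -/
def Manageable1 {V : Type*} [Fintype V] (N : TwoUnicastNetwork V)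
    (R1 R2 : List V) : Prop :=
  ∃ S : Set V, (∀ x ∈ R1, x ∈ S) ∧ (∀ x ∈ R2, x ∈ S) ∧ nInterf N S R1 N.s2 ≠ 1

/-- The pair `(R1, R2)` has `(s2,d2)`-manageable interference. -/
def Manageable2 {V : Type*} [Fintype V] (N : TwoUnicastNetwork V)
    (R1 R2 : List V) : Prop :=
  ∃ S : Set V, (∀ x ∈ R1, x ∈ S) ∧ (∀ x ∈ R2, x ∈ S) ∧ nInterf N S R2 N.s1 ≠ 1

/-- Removal of the vertex `v` disconnects `a` from `b` :
every path from `a` to `b` contains `v`. -/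
def CutVert {V : Type*} [Fintype V] (N : TwoUnicastNetwork V) (v a b : V) : Prop :=
  ∀ p, IsPath N.E p a b → v ∈ p

/-!
A walk from `s₂` that reaches `P₁₁` enters it along an edge whose tail causes interference on
`P₁₁`; since `v₂` is the only interferer and `(v₂, v₁)` the only edge from `P₂₂` into `P₁₁`, every
such walk passes through `v₂` and `v₁`. Hence `v₁` and `v₂` both separate `s₂` from `d₁`, and an
`s₂ → d₂` walk avoiding `v₂` never touches `P₁₁`. Finally, if an `s₁ → d₁` walk `Q` avoiding `v₁`
met `P₂₂` at `x`, then following `P₂₂` from `s₂` to `x` and `Q` from `x` to `d₁` would give a walk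
from `s₂` to `d₁` that reaches `v₁` only after `x`, i.e. on `Q`.
-/

namespace IsPath

variable {V : Type*} {E : V → V → Prop}

theorem head_mem {p : List V} {u w : V} (h : IsPath E p u w) : u ∈ p :=
  mem_of_mem_head? h.2.1

theorem getLast_mem {p : List V} {u w : V} (h : IsPath E p u w) : w ∈ p :=
  mem_of_mem_getLast? h.2.2.1

theorem singleton (u : V) : IsPath E [u] u u :=
  ⟨cons_ne_nil u [], rfl, rfl, List.IsChain.singleton u⟩

theorem cons {p : List V} {u v w : V} (huv : E u v) (h : IsPath E p v w) :
    IsPath E (u :: p) u w := by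
  obtain ⟨hne, hh, hl, hc⟩ := h
  obtain ⟨v', p, rfl⟩ := exists_cons_of_ne_nil hne
  cases hh
  exact ⟨cons_ne_nil u _, rfl, by simpa [getLast?_cons_cons] using hl, .cons_cons huv hc⟩

theorem cons_cons_iff {a b u w : V} {l : List V} :
    IsPath E (a :: b :: l) u w ↔ a = u ∧ E a b ∧ IsPath E (b :: l) b w := by
  constructor
  · rintro ⟨-, hh, hl, hc⟩
    obtain ⟨hab, hbl⟩ := isChain_cons_cons.mp hc
    exact ⟨Option.some.inj hh, hab, cons_ne_nil b l, rfl, by rwa [getLast?_cons_cons] at hl, hbl⟩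
  · rintro ⟨rfl, hab, hbl⟩
    exact hbl.cons hab

theorem left_of_append_cons {a b : List V} {x u w : V} (h : IsPath E (a ++ x :: b) u w) :
    IsPath E (a ++ [x]) u x := by
  obtain ⟨-, hh, -, hc⟩ := h
  refine ⟨by simp, ?_, getLast?_concat, (isChain_split.mp hc).1⟩
  cases a <;> simpa using hh

theorem right_of_append_cons {a b : List V} {x u w : V} (h : IsPath E (a ++ x :: b) u w) :
    IsPath E (x :: b) x w := by
  obtain ⟨-, -, hl, hc⟩ := h
  exact ⟨cons_ne_nil x b, rfl, by rwa [getLast?_append_cons] at hl, (isChain_split.mp hc).2⟩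

theorem append {p q : List V} {u x w : V} (hp : IsPath E p u x) (hq : IsPath E (x :: q) x w) :
    IsPath E (p ++ q) u w := by
  obtain ⟨hne, hh, hl, hc⟩ := hp
  obtain ⟨-, -, hql, hqc⟩ := hq
  obtain ⟨r, rfl⟩ : ∃ r, p = r ++ [x] := by
    refine ⟨p.dropLast, ?_⟩
    rw [getLast?_eq_some_getLast hne, Option.some.injEq] at hl
    rw [← hl, dropLast_append_getLast]
  simp only [append_assoc, singleton_append]
  exact ⟨by simp, by cases r <;> simpa using hh, by rwa [getLast?_append_cons],
    isChain_split.mpr ⟨hc, hqc⟩⟩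

theorem exists_edge_into {S : V → Prop} :
    ∀ {p : List V} {u w : V}, IsPath E p u w → ¬ S u → (∃ x ∈ p, S x) →
      ∃ q y x, IsPath E q u y ∧ (∀ z ∈ q, ¬ S z) ∧ y ∈ p ∧ x ∈ p ∧ E y x ∧ S x
  | [], _, _, h, _, _ => absurd rfl h.1
  | [a], u, _, h, hu, hS => by
    obtain rfl : a = u := Option.some.inj h.2.1
    simp_all
  | a :: b :: l, u, w, h, hu, hS => by
    obtain ⟨rfl, hab, hbl⟩ := cons_cons_iff.mp h
    by_cases hb : S b
    · exact ⟨[a], a, b, singleton a, by simpa, by simp, by simp, hab, hb⟩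
    · have hS' : ∃ x ∈ b :: l, S x := by
        obtain ⟨x, hx, hSx⟩ := hS
        rcases mem_cons.mp hx with rfl | hx
        · exact absurd hSx hu
        · exact ⟨x, hx, hSx⟩
      obtain ⟨q, y, x, hq, hqS, hy, hx, hyx, hSx⟩ := exists_edge_into hbl hb hS'
      exact ⟨a :: q, y, x, hq.cons hab, by simpa [hu] using hqS,
        mem_cons_of_mem a hy, mem_cons_of_mem a hx, hyx, hSx⟩

end IsPath

section Interference

variable {V : Type*} [Fintype V] {N : TwoUnicastNetwork V}

theorem exists_interferesOn_of_isPath {R Q : List V} {s t : V} (hQ : IsPath N.E Q s t)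
    (hs : s ∉ R) (hmeet : ∃ x ∈ Q, x ∈ R) :
    ∃ y ∈ Q, ∃ x ∈ Q, x ∈ R ∧ N.E y x ∧ InterferesOn N Set.univ R s y := by
  obtain ⟨q, y, x, hq, hqR, hy, hx, hyx, hxR⟩ := hQ.exists_edge_into (S := (· ∈ R)) hs hmeet
  exact ⟨y, hy, x, hx, hxR, hyx, trivial, hqR y hq.getLast_mem, ⟨x, hxR, trivial, hyx⟩,
    q, hq, fun _ _ => trivial, hqR⟩

variable {P11 P22 : List V} {v1 v2 : V}

theorem mem_of_isPath_from_s2_meets (hP22 : IsPath N.E P22 N.s2 N.d2)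
    (hdisj : P11.Disjoint P22) (hv2unique : {v | InterferesOn N Set.univ P11 N.s2 v} = {v2})
    (hv2P22 : v2 ∈ P22) (hedgeunique : ∀ u ∈ P22, ∀ w ∈ P11, N.E u w → u = v2 ∧ w = v1)
    {Q : List V} {t : V} (hQ : IsPath N.E Q N.s2 t) (hmeet : ∃ x ∈ Q, x ∈ P11) :
    v2 ∈ Q ∧ v1 ∈ Q := by
  obtain ⟨y, hyQ, x, hxQ, hxP11, hyx, hy⟩ :=
    exists_interferesOn_of_isPath hQ (fun h => hdisj h hP22.head_mem) hmeet
  obtain rfl : y = v2 := by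
    have hy' : y ∈ {v | InterferesOn N Set.univ P11 N.s2 v} := hy
    rwa [hv2unique] at hy'
  obtain rfl := (hedgeunique y hv2P22 x hxP11 hyx).2
  exact ⟨hyQ, hxQ⟩

theorem disjoint_of_isPath_not_mem (hP11 : IsPath N.E P11 N.s1 N.d1)
    (hP22 : IsPath N.E P22 N.s2 N.d2) (hdisj : P11.Disjoint P22)
    (hv2unique : {v | InterferesOn N Set.univ P11 N.s2 v} = {v2})
    (hv2P22 : v2 ∈ P22) (hv1P11 : v1 ∈ P11)
    (hedgeunique : ∀ u ∈ P22, ∀ w ∈ P11, N.E u w → u = v2 ∧ w = v1)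
    {Q : List V} (hQ : IsPath N.E Q N.s1 N.d1) (hv1Q : v1 ∉ Q) : Q.Disjoint P22 := by
  intro x hxQ hxP22
  obtain ⟨a, b, rfl⟩ := append_of_mem hxQ
  obtain ⟨f, g, hfg⟩ := append_of_mem hxP22
  have hW : IsPath N.E ((f ++ [x]) ++ b) N.s2 N.d1 :=
    (hfg ▸ hP22).left_of_append_cons.append hQ.right_of_append_cons
  have hv1W := (mem_of_isPath_from_s2_meets hP22 hdisj hv2unique hv2P22 hedgeunique hW
    ⟨N.d1, hW.getLast_mem, hP11.getLast_mem⟩).2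
  rcases mem_append.mp hv1W with hv1 | hv1
  · exact hdisj hv1P11 (by rw [hfg]; simp at hv1 ⊢; tauto)
  · exact hv1Q (by simp [hv1])

end Interference

theorem statement11_general {V : Type*} [Fintype V]
    (N : TwoUnicastNetwork V)
    (P11 P22 : List V)
    (v1 v2 : V)
    (hP11 : IsPath N.E P11 N.s1 N.d1)
    (hP22 : IsPath N.E P22 N.s2 N.d2)
    (hdisj : P11.Disjoint P22)
    (hv2unique : {v | InterferesOn N Set.univ P11 N.s2 v} = {v2})
    (hv2P22 : v2 ∈ P22)
    (hv1P11 : v1 ∈ P11)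
    (hedgeunique : ∀ u ∈ P22, ∀ w ∈ P11, N.E u w → u = v2 ∧ w = v1)
    (hNotAprime : ¬ ((CutVert N v1 N.s1 N.d1 ∧ CutVert N v1 N.s2 N.d1) ∧
      (CutVert N v2 N.s2 N.d1 ∧ CutVert N v2 N.s2 N.d2))) :
    (∃ Q : List V, IsPath N.E Q N.s1 N.d1 ∧ v1 ∉ Q ∧ Q.Disjoint P22) ∨
    (∃ Q : List V, IsPath N.E Q N.s2 N.d2 ∧ v2 ∉ Q ∧ Q.Disjoint P11) := by
  have hmem {Q : List V} {t : V} (hQ : IsPath N.E Q N.s2 t) (hmeet : ∃ x ∈ Q, x ∈ P11) :=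
    mem_of_isPath_from_s2_meets hP22 hdisj hv2unique hv2P22 hedgeunique hQ hmeet
  have hd1 : N.d1 ∈ P11 := hP11.getLast_mem
  simp only [CutVert, not_and_or, not_forall, exists_prop] at hNotAprime
  rcases hNotAprime with (⟨Q, hQ, hv1Q⟩ | ⟨Q, hQ, hv1Q⟩) | (⟨Q, hQ, hv2Q⟩ | ⟨Q, hQ, hv2Q⟩)
  · exact .inl ⟨Q, hQ, hv1Q, disjoint_of_isPath_not_mem hP11 hP22 hdisj hv2unique hv2P22
      hv1P11 hedgeunique hQ hv1Q⟩
  · exact absurd (hmem hQ ⟨N.d1, hQ.getLast_mem, hd1⟩).2 hv1Q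
  · exact absurd (hmem hQ ⟨N.d1, hQ.getLast_mem, hd1⟩).1 hv2Q
  · exact .inr ⟨Q, hQ, hv2Q, fun x hxQ hxP11 => hv2Q (hmem hQ ⟨x, hxQ, hxP11⟩).1⟩

theorem statement11 {V : Type*} [Fintype V]
    (N : TwoUnicastNetwork V)
    (P11 P22 : List V)
    (v1 v2 : V)
    (hP11 : IsPath N.E P11 N.s1 N.d1)
    (hP22 : IsPath N.E P22 N.s2 N.d2)
    (hdisj : P11.Disjoint P22)
    (hNoMan : ∀ R1 R2 : List V, IsPath N.E R1 N.s1 N.d1 → IsPath N.E R2 N.s2 N.d2 →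
      R1.Disjoint R2 → ¬ Manageable N R1 R2)
    (hn1 : nInterf N Set.univ P11 N.s2 = 1)
    (hn1D : nDirect N P11 P22 N.s2 = 1)
    (hv2unique : {v | InterferesOn N Set.univ P11 N.s2 v} = {v2})
    (hv2P22 : v2 ∈ P22)
    (hv1P11 : v1 ∈ P11)
    (hv2v1 : N.E v2 v1)
    (hedgeunique : ∀ u ∈ P22, ∀ w ∈ P11, N.E u w → u = v2 ∧ w = v1)
    (hNotAprime : ¬ ((CutVert N v1 N.s1 N.d1 ∧ CutVert N v1 N.s2 N.d1) ∧
      (CutVert N v2 N.s2 N.d1 ∧ CutVert N v2 N.s2 N.d2))) :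
    (∃ Q : List V, IsPath N.E Q N.s1 N.d1 ∧ v1 ∉ Q ∧ Q.Disjoint P22) ∨
    (∃ Q : List V, IsPath N.E Q N.s2 N.d2 ∧ v2 ∉ Q ∧ Q.Disjoint P11) :=
  statement11_general N P11 P22 v1 v2 hP11 hP22 hdisj hv2unique hv2P22 hv1P11 hedgeunique hNotAprime
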